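/- For all n, m, α, β, γ ∈ ℕ, the iterated formal partial derivative of the modified box spline symbol B̃#_{α,β,γ}(z₁,z₂) = ((1+z₁)/2)^α ((1+z₂)/2)^β ((z₁+z₂)/2)^γ satisfies, as an identity in ℝ[z₁,z₂]: D^{(n,m)} B̃#_{α,β,γ}(z₁,z₂) = Σ_{ℓ=0}^{γ} C(γ,ℓ) · [ Σ_{i=0}^{n} (n!/2^n) C(α, n−i) ((1+z₁)/2)^{α−(n−i)} C(ℓ, i) (z₁/2)^{ℓ−i} ] · [ Σ_{j=0}^{m} (m!/2^m) C(β, m−j) ((1+z₂)/2)^{β−(m−j)} C(γ−ℓ, j) (z₂/2)^{γ−ℓ−j} ], where each summand is understood to be zero whenever one of its binomial coefficients vanishes (so all exponents occurring in nonzero summands are nonnegative). -/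

import Mathlib

open MvPolynomial

/-- The modified box spline symbol
`B̃#_{α,β,γ}(z₁,z₂) = ((1+z₁)/2)^α ((1+z₂)/2)^β ((z₁+z₂)/2)^γ`. -/
noncomputable def Bst (α β γ : ℕ) : MvPolynomial (Fin 2) ℝ :=
  (C (1 / 2 : ℝ) * (1 + X 0)) ^ α * (C (1 / 2 : ℝ) * (1 + X 1)) ^ β *
    (C (1 / 2 : ℝ) * (X 0 + X 1)) ^ γ

/-- The formal partial derivative `D^{(n,m)} = ∂^{n+m}/∂z₁^n ∂z₂^m`. -/
noncomputable def Dnm (n m : ℕ) : Module.End ℝ (MvPolynomial (Fin 2) ℝ) :=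
  ((pderiv (0 : Fin 2)).toLinearMap ^ n) * ((pderiv (1 : Fin 2)).toLinearMap ^ m)

/-!
Expanding `((z₁ + z₂)/2)^γ` by the binomial theorem separates the variables: each summand is a
polynomial in `z₁` times a polynomial in `z₂`, so `D^{(n,m)}` acts on it as `∂₁ⁿ` on the first
factor times `∂₂ᵐ` on the second.  Each factor is a product of powers of two affine forms whose
derivative is the constant `1/2`, and the general Leibniz rule for derivations gives the inner sums.
-/

open Finset

namespace Derivation

variable {R A : Type*} [CommSemiring R] [CommSemiring A] [Algebra R A] (D : Derivation R A A)

theorem iterate_mul (n : ℕ) (a b : A) :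
    D^[n] (a * b) = ∑ ij ∈ antidiagonal n, n.choose ij.1 • (D^[ij.1] a * D^[ij.2] b) := by
  induction n with
  | zero => simp
  | succ n ih =>
    rw [sum_antidiagonal_choose_succ_nsmul (M := A) (fun i j => D^[i] a * D^[j] b) n]
    simp only [Function.iterate_succ_apply', ih, map_sum, map_nsmul, leibniz, smul_eq_mul,
      smul_add, sum_add_distrib]
    congr 1
    refine sum_congr rfl fun ⟨i, j⟩ hij => ?_
    rw [n.choose_symm_of_eq_add (mem_antidiagonal.1 hij).symm]
    ring

theorem iterate_mul_of_apply_eq_zero {c : A} (hc : D c = 0) (n : ℕ) (a : A) :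
    D^[n] (c * a) = c * D^[n] a := by
  induction n with
  | zero => rfl
  | succ n ih =>
    simp only [Function.iterate_succ_apply', ih, leibniz, hc, smul_eq_mul, mul_zero, add_zero]

theorem iterate_pow_of_apply_eq_algebraMap {p : A} {c : R} (hp : D p = algebraMap R A c)
    (a k : ℕ) :
    D^[k] (p ^ a) = algebraMap R A (a.descFactorial k * c ^ k) * p ^ (a - k) := by
  induction k with
  | zero => simp
  | succ k ih =>
    rw [Function.iterate_succ_apply', ih, leibniz, map_algebraMap, smul_zero, add_zero,
      leibniz_pow, hp, Nat.descFactorial_succ, Nat.sub_sub]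
    simp only [Nat.cast_mul, map_mul, map_pow, _root_.map_natCast, smul_eq_mul, nsmul_eq_mul]
    ring

theorem iterate_pow_mul_pow_of_apply_eq_algebraMap {p q : A} {c : R}
    (hp : D p = algebraMap R A c) (hq : D q = algebraMap R A c) (n a b : ℕ) :
    D^[n] (p ^ a * q ^ b) =
      ∑ i ∈ range (n + 1),
        algebraMap R A (n.factorial * c ^ n * a.choose (n - i) * b.choose i) *
          p ^ (a - (n - i)) * q ^ (b - i) := by
  rw [iterate_mul, ← Nat.sum_antidiagonal_swap, Nat.sum_antidiagonal_eq_sum_range_succ_mk]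
  refine sum_congr rfl fun i hi => ?_
  have hin : i ≤ n := Nat.lt_succ_iff.mp (mem_range.mp hi)
  have hcoeff : (n.choose i * ((a.descFactorial (n - i)) * c ^ (n - i)) *
      ((b.descFactorial i) * c ^ i) : R) =
      n.factorial * c ^ n * a.choose (n - i) * b.choose i := by
    rw [← Nat.choose_mul_factorial_mul_factorial hin, ← pow_sub_mul_pow c hin,
      Nat.descFactorial_eq_factorial_mul_choose, Nat.descFactorial_eq_factorial_mul_choose]
    push_cast
    ring
  simp only [Prod.swap, D.iterate_pow_of_apply_eq_algebraMap hp,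
    D.iterate_pow_of_apply_eq_algebraMap hq, Nat.choose_symm hin, nsmul_eq_mul,
    ← _root_.map_natCast (algebraMap R A), ← hcoeff, map_mul]
  ring

theorem iterate_iterate_mul_of_commute {E : Derivation R A A} (hDE : Function.Commute D E)
    {f g : A} (hf : E f = 0) (hg : D g = 0) (n m : ℕ) :
    D^[n] (E^[m] (f * g)) = D^[n] f * E^[m] g := by
  have hg' : D (E^[m] g) = 0 := by
    rw [(hDE.iterate_right m) g, hg, iterate_map_zero]
  rw [E.iterate_mul_of_apply_eq_zero hf, mul_comm, D.iterate_mul_of_apply_eq_zero hg', mul_comm]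

end Derivation

theorem MvPolynomial.pderiv_pderiv_comm {R σ : Type*} [CommRing R] (i j : σ)
    (f : MvPolynomial σ R) : pderiv i (pderiv j f) = pderiv j (pderiv i f) := by
  -- the commutator is again a derivation, and it kills every generator `X k`
  have hbracket :
      ⁅pderiv i, pderiv j⁆ = (0 : Derivation R (MvPolynomial σ R) (MvPolynomial σ R)) :=
    derivation_ext fun k => by
      rw [Derivation.commutator_apply]
      rcases eq_or_ne k i with rfl | hki <;> rcases eq_or_ne k j with rfl | hkj <;>
        simp [pderiv_X_of_ne, *]
  rw [← sub_eq_zero, ← Derivation.commutator_apply, hbracket, Derivation.zero_apply]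

theorem Dnm_apply (n m : ℕ) (f : MvPolynomial (Fin 2) ℝ) :
    Dnm n m f = (pderiv 0)^[n] ((pderiv 1)^[m] f) := by
  simp [Dnm, Module.End.mul_apply, Module.End.pow_apply]

theorem Bst_eq_sum (α β γ : ℕ) :
    Bst α β γ = ∑ ℓ ∈ range (γ + 1),
      C (γ.choose ℓ : ℝ) * ((C (1 / 2 : ℝ) * (1 + X 0)) ^ α * (C (1 / 2 : ℝ) * X 0) ^ ℓ) *
        ((C (1 / 2 : ℝ) * (1 + X 1)) ^ β * (C (1 / 2 : ℝ) * X 1) ^ (γ - ℓ)) := by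
  rw [Bst, mul_add (C (1 / 2 : ℝ)) (X 0) (X 1), add_pow, mul_sum]
  refine sum_congr rfl fun ℓ _ => ?_
  rw [← C_eq_coe_nat]
  ring

/-- The Leibniz-type formula for `D^{(n,m)} B̃#_{α,β,γ}`.  Summands whose binomial
coefficients vanish are zero (the vanishing binomial coefficient is a factor), so the
truncated natural subtraction in the exponents is harmless. -/
theorem stmt_17 (n m α β γ : ℕ) :
    Dnm n m (Bst α β γ) =
      ∑ ℓ ∈ Finset.range (γ + 1),
        C ((γ.choose ℓ : ℝ)) *
        (∑ i ∈ Finset.range (n + 1),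
          C ((n.factorial : ℝ) / 2 ^ n * (α.choose (n - i) : ℝ) * (ℓ.choose i : ℝ)) *
            (C (1 / 2 : ℝ) * (1 + X 0)) ^ (α - (n - i)) *
            (C (1 / 2 : ℝ) * X 0) ^ (ℓ - i)) *
        (∑ j ∈ Finset.range (m + 1),
          C ((m.factorial : ℝ) / 2 ^ m * (β.choose (m - j) : ℝ) *
              ((γ - ℓ).choose j : ℝ)) *
            (C (1 / 2 : ℝ) * (1 + X 1)) ^ (β - (m - j)) *
            (C (1 / 2 : ℝ) * X 1) ^ (γ - ℓ - j)) := by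
  have hP : ∀ i : Fin 2, pderiv i (C (1 / 2 : ℝ) * (1 + X i)) = algebraMap ℝ _ (1 / 2) :=
    fun i => by simp
  have hQ : ∀ i : Fin 2, pderiv i (C (1 / 2 : ℝ) * X i) = algebraMap ℝ _ (1 / 2) :=
    fun i => by simp
  rw [Bst_eq_sum, map_sum]
  refine sum_congr rfl fun ℓ _ => ?_
  rw [Dnm_apply, (pderiv 0).iterate_iterate_mul_of_commute (pderiv_pderiv_comm 0 1)
      (by simp) (by simp), (pderiv 0).iterate_mul_of_apply_eq_zero pderiv_C,
    (pderiv 0).iterate_pow_mul_pow_of_apply_eq_algebraMap (hP 0) (hQ 0),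
    (pderiv 1).iterate_pow_mul_pow_of_apply_eq_algebraMap (hP 1) (hQ 1)]
  simp only [algebraMap_eq, one_div_pow, mul_one_div]
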